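/- arXiv:2404.10521 — 6 statements merged into one kernel-verified Lean document; each statement's English description precedes it below -/
import Mathlib

section
/- Let A be a finite commutative unitary ring with A ≠ {0} and let R be a nonempty subset of A closed under addition. Then there are only finitely many irreducible λ-quiddities over R; more precisely, there exists an integer L such that every irreducible λ-quiddity over R has size at most L (in fact every λ-quiddity over R of size at least |SL₂(A)| + 1 is reducible). -/
/-- The matrix `[[a, -1], [1, 0]]`. -/
def mMat {A : Type*} [CommRing A] (a : A) : Matrix (Fin 2) (Fin 2) A := !![a, -1; 1, 0]

/-- `M_n(a₁, …, aₙ) = mMat aₙ * ⋯ * mMat a₁`, for the tuple given as a list `[a₁, …, aₙ]`. -/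
def mProd {A : Type*} [CommRing A] (l : List A) : Matrix (Fin 2) (Fin 2) A :=
  ((l.map mMat).reverse).prod

/-- The sum `(a₁,…,aₙ) ⊕ (b₁,…,b_m) = (a₁+b_m, a₂,…,a_{n−1}, aₙ+b₁, b₂,…,b_{m−1})`. -/
def oplus {A : Type*} [CommRing A] (a b : List A) : List A :=
  (a.headD 0 + b.getLastD 0) ::
    (a.dropLast.tail ++ (a.getLastD 0 + b.headD 0) :: b.dropLast.tail)

/-- Two tuples are equivalent if one is a cyclic rotation of the other or of its reversal. -/
def TupEquiv {A : Type*} (a b : List A) : Prop :=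
  (∃ k, b = a.rotate k) ∨ (∃ k, b = a.reverse.rotate k)

/-- A λ-quiddity over `R ⊆ A`: all entries lie in `R` and `M_n(a₁,…,aₙ) = ± Id`. -/
def IsQuiddity {A : Type*} [CommRing A] (R : Set A) (c : List A) : Prop :=
  (∀ x ∈ c, x ∈ R) ∧ (mProd c = 1 ∨ mProd c = -1)

/-- A λ-quiddity `c` over `R` is reducible if `c ∼ a ⊕ b` with `a ∈ R^m`, `m ≥ 3`,
and `b` a λ-quiddity over `R` of size `l ≥ 3`. -/
def IsReducible {A : Type*} [CommRing A] (R : Set A) (c : List A) : Prop :=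
  ∃ a b : List A, 3 ≤ a.length ∧ 3 ≤ b.length ∧ (∀ x ∈ a, x ∈ R) ∧
    IsQuiddity R b ∧ TupEquiv c (oplus a b)

/-- An irreducible λ-quiddity over `R`: a λ-quiddity of size `≥ 3` which is not reducible. -/
def IrreducibleQuiddity {A : Type*} [CommRing A] (R : Set A) (c : List A) : Prop :=
  IsQuiddity R c ∧ 3 ≤ c.length ∧ ¬ IsReducible R c

/-- The continuant `K_i(a₁,…,a_i)`, determinant of the tridiagonal matrix with diagonal
`a₁,…,a_i` and off-diagonal entries `1`; `K₀ = 1`. -/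
def cont {A : Type*} [CommRing A] : List A → A
  | [] => 1
  | [a] => a
  | a :: b :: l => a * cont (b :: l) - cont l

/-!
If a λ-quiddity `c` is longer than `|SL₂(A)|`, two of its prefix products `M_i(c)` and `M_j(c)`,
`i < j < n`, coincide, so the segment `v` of `c` between them has `M(v) = Id`; the complementary
cyclic segment `w u` then has `M(w u) = ± Id` as well. Since `(0, X, 0)` is a λ-quiddity as soon
as `X` is one, and `x ⊕ (0, y, 0) = x y`, the rotation `w u v` of `c` equals `(w u) ⊕ (0, v, 0)`
and the rotation `v w u` equals `v ⊕ (0, w u, 0)`. As `|SL₂(A)| ≥ 4`, `c` has at least five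
entries, so one of `w u`, `v` has at least three and `c` is reducible. Finally `0 ∈ R`, since
`R` is closed under addition in the finite group `A`.
-/

open scoped MatrixGroups

lemma zero_mem_of_add_mem {M : Type*} [AddLeftCancelMonoid M] [Finite M] {R : Set M}
    (hR : R.Nonempty) (hadd : ∀ x ∈ R, ∀ y ∈ R, x + y ∈ R) : (0 : M) ∈ R := by
  obtain ⟨r, hr⟩ := hR
  have hmul : ∀ k : ℕ, (k + 1) • r ∈ R := by
    intro k
    induction k with
    | zero => simpa using hr
    | succ k ih => rw [succ_nsmul]; exact hadd _ ih _ hr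
  simpa [Nat.sub_add_cancel (addOrderOf_pos r), addOrderOf_nsmul_eq_zero] using
    hmul (addOrderOf r - 1)

section Quiddity

variable {A : Type*} [CommRing A]

lemma mProd_cons (x : A) (l : List A) : mProd (x :: l) = mProd l * mMat x := by
  simp [mProd]

lemma mProd_append (u v : List A) : mProd (u ++ v) = mProd v * mProd u := by
  simp [mProd]

lemma mProd_singleton (x : A) : mProd [x] = mMat x := by
  simp [mProd]

lemma det_mProd (l : List A) : (mProd l).det = 1 := by
  induction l with
  | nil => simp [mProd]
  | cons x l ih => simp [mProd_cons, ih, mMat, Matrix.det_fin_two_of]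

lemma mMat_zero_mul_self : mMat (0 : A) * mMat 0 = -1 := by
  ext i j
  fin_cases i <;> fin_cases j <;> simp [mMat]

lemma mProd_append_comm {u w : List A} (h : mProd (u ++ w) = 1 ∨ mProd (u ++ w) = -1) :
    mProd (w ++ u) = 1 ∨ mProd (w ++ u) = -1 := by
  rw [mProd_append] at h ⊢
  refine h.imp mul_eq_one_comm.mp fun h => ?_
  rw [← neg_eq_iff_eq_neg, ← mul_neg, mul_eq_one_comm, neg_mul, h, neg_neg]

lemma isQuiddity_zero_cap {R : Set A} (h0 : (0 : A) ∈ R) {X : List A} (hX : IsQuiddity R X) :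
    IsQuiddity R (0 :: X ++ [0]) := by
  refine ⟨by simpa [or_imp, forall_and, h0] using hX.1, ?_⟩
  rw [List.cons_append, mProd_cons, mProd_append, mProd_singleton]
  rcases hX.2 with h | h <;> simp [h, mMat_zero_mul_self]

lemma oplus_zero_cap (x y : List A) (hx : 2 ≤ x.length) :
    oplus x (0 :: y ++ [0]) = x ++ y := by
  obtain ⟨a, m, c, rfl⟩ : ∃ a m c, x = a :: (m ++ [c]) := by
    match x, hx with
    | a :: b :: m, _ =>
      exact ⟨a, _, _, congrArg _ (List.dropLast_append_getLast (List.cons_ne_nil b m)).symm⟩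
  simp only [oplus, ← List.cons_append, List.getLastD_concat, List.dropLast_concat]
  simp

lemma isReducible_of_rotate_eq_append {R : Set A} (h0 : (0 : A) ∈ R) {c x y : List A} {k : ℕ}
    (hR : ∀ z ∈ c, z ∈ R) (hc : c.rotate k = x ++ y) (hx : 3 ≤ x.length) (hy : y ≠ [])
    (hy1 : mProd y = 1 ∨ mProd y = -1) : IsReducible R c := by
  have hxy : ∀ z ∈ x ++ y, z ∈ R := fun z hz => hR z (List.mem_rotate.mp (hc ▸ hz))
  refine ⟨x, 0 :: y ++ [0], hx, ?_, fun z hz => hxy z (List.mem_append_left _ hz),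
    isQuiddity_zero_cap h0 ⟨fun z hz => hxy z (List.mem_append_right _ hz), hy1⟩,
    Or.inl ⟨k, ?_⟩⟩
  · have := List.length_pos_of_ne_nil hy
    simp only [List.cons_append, List.length_cons, List.length_append]
    omega
  · rw [oplus_zero_cap x y (by omega), hc]

lemma isReducible_of_mProd_eq_one {R : Set A} (h0 : (0 : A) ∈ R) {u v w : List A}
    (hc : IsQuiddity R (u ++ v ++ w)) (hlen : 5 ≤ (u ++ v ++ w).length) (hv : v ≠ [])
    (hw : w ≠ []) (hv1 : mProd v = 1) : IsReducible R (u ++ v ++ w) := by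
  by_cases hwu : 3 ≤ (w ++ u).length
  · refine isReducible_of_rotate_eq_append h0 hc.1 (k := (u ++ v).length) ?_ hwu hv (Or.inl hv1)
    rw [List.rotate_append_length_eq, List.append_assoc]
  · have hwu1 : mProd (w ++ u) = 1 ∨ mProd (w ++ u) = -1 := by
      apply mProd_append_comm
      simpa [mProd_append, hv1] using hc.2
    refine isReducible_of_rotate_eq_append h0 hc.1 (k := u.length) (x := v) ?_ ?_
      (by simp [hw]) hwu1
    · rw [List.append_assoc, List.rotate_append_length_eq, List.append_assoc]
    · simp only [List.length_append] at hlen hwu ⊢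
      omega

def sProd (l : List A) : SL(2, A) := ⟨mProd l, det_mProd l⟩

lemma sProd_append (u v : List A) : sProd (u ++ v) = sProd v * sProd u :=
  Subtype.ext (by rw [Matrix.SpecialLinearGroup.coe_mul]; exact mProd_append u v)

lemma exists_eq_append_mProd_eq_one {c : List A} {i j : ℕ} (hij : i < j) (hj : j < c.length)
    (h : sProd (c.take i) = sProd (c.take j)) :
    ∃ u v w, c = u ++ v ++ w ∧ v ≠ [] ∧ w ≠ [] ∧ mProd v = 1 := by
  have htake : c.take i ++ (c.take j).drop i = c.take j := by
    simpa [List.take_take, hij.le] using List.take_append_drop i (c.take j)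
  refine ⟨c.take i, (c.take j).drop i, c.drop j, ?_, ?_, ?_, ?_⟩
  · rw [htake, List.take_append_drop]
  · rw [Ne, List.drop_eq_nil_iff, List.length_take]
    omega
  · rw [Ne, List.drop_eq_nil_iff]
    omega
  · have : sProd ((c.take j).drop i) * sProd (c.take i) = 1 * sProd (c.take i) := by
      rw [← sProd_append, htake, h, one_mul]
    simpa [sProd] using
      congrArg (↑· : SL(2, A) → Matrix (Fin 2) (Fin 2) A) (mul_right_cancel this)

end Quiddity

section FiniteRing

variable {A : Type*} [CommRing A] [Fintype A]

lemma four_le_card_SL2 [Nontrivial A] : 4 ≤ Nat.card SL(2, A) := by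
  let f : Fin 4 → SL(2, A) := ![1, ⟨!![1, 1; 0, 1], by simp⟩, ⟨!![1, 0; 1, 1], by simp⟩,
    ⟨!![0, -1; 1, 0], by simp⟩]
  have hf : Function.Injective f := by
    intro a b hab
    have h00 := congrArg (fun g : SL(2, A) => g 0 0) hab
    have h01 := congrArg (fun g : SL(2, A) => g 0 1) hab
    have h10 := congrArg (fun g : SL(2, A) => g 1 0) hab
    fin_cases a <;> fin_cases b <;> first | rfl | simp [f] at h00 h01 h10
  simpa using Nat.card_le_card_of_injective f hf

lemma exists_eq_append_mProd_eq_one_of_card_lt {c : List A} (hc : Nat.card SL(2, A) < c.length) :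
    ∃ u v w, c = u ++ v ++ w ∧ v ≠ [] ∧ w ≠ [] ∧ mProd v = 1 := by
  obtain ⟨i, j, hne, heq⟩ : ∃ i j : Fin c.length, i ≠ j ∧
      sProd (c.take i) = sProd (c.take j) := by
    by_contra! h
    exact (Nat.card_le_card_of_injective _ fun i j hij => not_imp_not.mp (h i j) hij).not_gt
      (by simpa using hc)
  rcases hne.lt_or_gt with hlt | hlt
  · exact exists_eq_append_mProd_eq_one hlt j.isLt heq
  · exact exists_eq_append_mProd_eq_one hlt i.isLt heq.symm

end FiniteRing

/-- Over a finite nontrivial commutative ring `A`, for any nonempty `R ⊆ A` closed under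
addition, there are finitely many irreducible λ-quiddities over `R`; the size of irreducible
λ-quiddities over `R` is bounded, and every λ-quiddity over `R` of size at least
`|SL₂(A)| + 1` is reducible. -/
theorem stmt0 {A : Type*} [CommRing A] [Fintype A] [Nontrivial A]
    (R : Set A) (hR : R.Nonempty) (hadd : ∀ x ∈ R, ∀ y ∈ R, x + y ∈ R) :
    {c : List A | IrreducibleQuiddity R c}.Finite ∧
    (∃ L : ℕ, ∀ c : List A, IrreducibleQuiddity R c → c.length ≤ L) ∧
    (∀ c : List A, IsQuiddity R c →
      Nat.card (Matrix.SpecialLinearGroup (Fin 2) A) + 1 ≤ c.length →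
      IsReducible R c) := by
  have hreducible : ∀ c : List A, IsQuiddity R c →
      Nat.card SL(2, A) + 1 ≤ c.length → IsReducible R c := by
    intro c hc hlen
    obtain ⟨u, v, w, rfl, hv, hw, hv1⟩ :=
      exists_eq_append_mProd_eq_one_of_card_lt (c := c) (by omega)
    exact isReducible_of_mProd_eq_one (zero_mem_of_add_mem hR hadd) hc
      (by have := four_le_card_SL2 (A := A); omega) hv hw hv1
  have hbound : ∀ c : List A, IrreducibleQuiddity R c → c.length ≤ Nat.card SL(2, A) :=
    fun c hc => not_lt.mp fun hlen => hc.2.2 (hreducible c hc.1 hlen)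
  exact ⟨(List.finite_length_le A _).subset hbound, ⟨_, hbound⟩, hreducible⟩
end

section
/- The set of irreducible λ-quiddities over ℤ is exactly {(1,1,1), (−1,−1,−1)} ∪ {(a,0,−a,0) : a ∈ ℤ, a ∉ {−1,1}} ∪ {(0,a,0,−a) : a ∈ ℤ, a ∉ {−1,1}}. -/
namespace List

variable {α : Type*}

lemma exists_rotate_eq_cons {l : List α} {x : α} (hx : x ∈ l) :
    ∃ k w, l.rotate k = x :: w := by
  obtain ⟨u, v, rfl⟩ := append_of_mem hx
  exact ⟨u.length, v ++ u, by rw [rotate_append_length_eq, cons_append]⟩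

lemma exists_eq_cons_append_singleton {l : List α} (hl : 2 ≤ l.length) :
    ∃ p t z, l = p :: (t ++ [z]) := by
  obtain _ | ⟨p, l⟩ := l
  · simp at hl
  obtain rfl | ⟨t, z, rfl⟩ := l.eq_nil_or_concat
  · simp at hl
  exact ⟨p, t, z, by simp⟩

end List

namespace TupEquiv

variable {α : Type*} {c d : List α}

lemma length_eq (h : TupEquiv c d) : d.length = c.length := by
  rcases h with ⟨k, rfl⟩ | ⟨k, rfl⟩ <;> simp

lemma mem (h : TupEquiv c d) {x : α} (hx : x ∈ d) : x ∈ c := by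
  rcases h with ⟨k, rfl⟩ | ⟨k, rfl⟩ <;> simp_all

end TupEquiv

section CommRing

variable {A : Type*} [CommRing A]

lemma Matrix.fin_two_eq_one_iff {a b c d : A} :
    !![a, b; c, d] = 1 ↔ a = 1 ∧ b = 0 ∧ c = 0 ∧ d = 1 := by
  simp [← Matrix.ext_iff, Fin.forall_fin_two, and_assoc]

lemma Matrix.fin_two_eq_neg_one_iff {a b c d : A} :
    !![a, b; c, d] = -1 ↔ a = -1 ∧ b = 0 ∧ c = 0 ∧ d = -1 := by
  simp [← Matrix.ext_iff, Fin.forall_fin_two, and_assoc]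

lemma mProd_cons_one_zero (x : A) (l : List A) :
    mProd (x :: l) 1 0 = mProd l 1 0 * x + mProd l 1 1 := by
  simp [mProd, mMat, Matrix.mul_apply]

lemma mProd_cons_one_one (x : A) (l : List A) : mProd (x :: l) 1 1 = -mProd l 1 0 := by
  simp [mProd, mMat, Matrix.mul_apply]

lemma mProd_three (a b c : A) :
    mProd [a, b, c] = !![c * b * a - c - a, 1 - c * b; b * a - 1, -b] := by
  ext i j; fin_cases i <;> fin_cases j <;> simp [mProd, mMat] <;> ring

lemma mProd_four (a b c d : A) :
    mProd [a, b, c, d] = !![d * c * b * a - d * c - d * a - b * a + 1, d + b - d * c * b;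
      c * b * a - c - a, 1 - c * b] := by
  ext i j; fin_cases i <;> fin_cases j <;> simp [mProd, mMat] <;> ring

lemma mProd_three_eq_one_iff {a b c : A} :
    mProd [a, b, c] = 1 ↔ a = -1 ∧ b = -1 ∧ c = -1 := by
  rw [mProd_three, Matrix.fin_two_eq_one_iff]
  constructor
  · rintro ⟨-, h01, h10, h11⟩
    obtain rfl : b = -1 := by linear_combination -h11
    exact ⟨by linear_combination -h10, rfl, by linear_combination h01⟩
  · rintro ⟨rfl, rfl, rfl⟩
    norm_num

lemma mProd_three_eq_neg_one_iff {a b c : A} :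
    mProd [a, b, c] = -1 ↔ a = 1 ∧ b = 1 ∧ c = 1 := by
  rw [mProd_three, Matrix.fin_two_eq_neg_one_iff]
  constructor
  · rintro ⟨-, h01, h10, h11⟩
    obtain rfl : b = 1 := by linear_combination -h11
    exact ⟨by linear_combination h10, rfl, by linear_combination -h01⟩
  · rintro ⟨rfl, rfl, rfl⟩
    norm_num

lemma isQuiddity_univ_three_iff {a b c : A} :
    IsQuiddity Set.univ [a, b, c] ↔ [a, b, c] = [1, 1, 1] ∨ [a, b, c] = [-1, -1, -1] := by
  simp [IsQuiddity, mProd_three_eq_one_iff, mProd_three_eq_neg_one_iff, or_comm]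

lemma oplus_cons_append (p z q r : A) (t s : List A) :
    oplus (p :: (t ++ [z])) (q :: (s ++ [r])) = (p + r) :: (t ++ (z + q) :: s) := by
  simp only [oplus, List.headD_cons]
  rw [← List.cons_append (a := p), ← List.cons_append (a := q)]
  simp only [List.getLastD_concat, List.dropLast_concat, List.tail_cons]

lemma length_oplus {a b : List A} (ha : 2 ≤ a.length) (hb : 2 ≤ b.length) :
    (oplus a b).length = a.length + b.length - 2 := by
  simp only [oplus, List.length_cons, List.length_append, List.length_tail, List.length_dropLast]
  omega

namespace IsReducible

variable {R : Set A} {c : List A}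

lemma four_le_length (h : IsReducible R c) : 4 ≤ c.length := by
  obtain ⟨a, b, ha, hb, -, -, hc⟩ := h
  rw [← hc.length_eq, length_oplus (by omega) (by omega)]
  omega

lemma one_mem_or_neg_one_mem_of_length_eq_four (h : IsReducible R c) (hc : c.length = 4) :
    1 ∈ c ∨ -1 ∈ c := by
  obtain ⟨a, b, ha, hb, -, ⟨-, hq⟩, hab⟩ := h
  have hlen := hab.length_eq
  rw [length_oplus (by omega) (by omega)] at hlen
  obtain ⟨p, q, r, rfl⟩ := List.length_eq_three.mp (show b.length = 3 by omega)
  obtain ⟨s, t, u, rfl⟩ := List.length_eq_three.mp (show a.length = 3 by omega)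
  have hqc : q ∈ c := hab.mem (by simp [oplus])
  rcases hq with hq | hq
  · exact Or.inr ((mProd_three_eq_one_iff.mp hq).2.1 ▸ hqc)
  · exact Or.inl ((mProd_three_eq_neg_one_iff.mp hq).2.1 ▸ hqc)

end IsReducible

lemma isReducible_univ_of_mem {c : List A} {e : A} (he : e = 1 ∨ e = -1) (hc : 4 ≤ c.length)
    (hec : e ∈ c) : IsReducible Set.univ c := by
  obtain ⟨k, w, hk⟩ := List.exists_rotate_eq_cons hec
  have hw : w.length + 1 = c.length := by simpa using congrArg List.length hk.symm
  obtain ⟨p, t, z, rfl⟩ := List.exists_eq_cons_append_singleton (by omega : 2 ≤ w.length)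
  rw [List.length_cons, List.length_append, List.length_singleton] at hw
  have hq : IsQuiddity Set.univ [e, e, e] :=
    isQuiddity_univ_three_iff.mpr (by rcases he with rfl | rfl <;> simp)
  refine ⟨(p - e) :: (t ++ [z - e]), [e, e, e], ?_, le_rfl, by simp, hq, Or.inl ⟨k + 1, ?_⟩⟩
  · rw [List.length_cons, List.length_append, List.length_singleton]
    omega
  · rw [← List.rotate_rotate, hk, show [e, e, e] = e :: ([e] ++ [e]) from rfl, oplus_cons_append]
    simp

lemma isReducible_univ_of_zero_mem {c : List A} (hc : 5 ≤ c.length) (h0 : (0 : A) ∈ c) :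
    IsReducible Set.univ c := by
  obtain ⟨k, w, hk⟩ := List.exists_rotate_eq_cons h0
  have hw : w.length + 1 = c.length := by simpa using congrArg List.length hk.symm
  obtain ⟨y, w, rfl⟩ := List.exists_cons_of_length_pos (by omega : 0 < w.length)
  rw [List.length_cons] at hw
  obtain ⟨p, t, z, rfl⟩ := List.exists_eq_cons_append_singleton (by omega : 2 ≤ w.length)
  rw [List.length_cons, List.length_append, List.length_singleton] at hw
  have hq : IsQuiddity Set.univ [-y, 0, y, 0] :=
    ⟨by simp, Or.inl (by simp [mProd_four, Matrix.one_fin_two])⟩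
  refine ⟨p :: (t ++ [z + y]), [-y, 0, y, 0], ?_, by simp, by simp, hq, Or.inl ⟨k + 2, ?_⟩⟩
  · rw [List.length_cons, List.length_append, List.length_singleton]
    omega
  · rw [← List.rotate_rotate, hk, show [-y, 0, y, 0] = -y :: ([0, y] ++ [0]) from rfl,
      oplus_cons_append]
    simp

lemma irreducibleQuiddity_iff_of_length_eq_three {R : Set A} {c : List A} (hc : c.length = 3) :
    IrreducibleQuiddity R c ↔ IsQuiddity R c :=
  ⟨fun h ↦ h.1, fun h ↦ ⟨h, hc.ge, fun hr ↦ by have := hr.four_le_length; omega⟩⟩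

lemma irreducibleQuiddity_univ_iff_of_length_eq_four {c : List A} (hc : c.length = 4) :
    IrreducibleQuiddity Set.univ c ↔ IsQuiddity Set.univ c ∧ 1 ∉ c ∧ -1 ∉ c := by
  constructor
  · rintro ⟨hq, -, hirr⟩
    exact ⟨hq, fun h ↦ hirr (isReducible_univ_of_mem (Or.inl rfl) hc.ge h),
      fun h ↦ hirr (isReducible_univ_of_mem (Or.inr rfl) hc.ge h)⟩
  · rintro ⟨hq, h1, h2⟩
    exact ⟨hq, by omega, fun hr ↦ (hr.one_mem_or_neg_one_mem_of_length_eq_four hc).elim h1 h2⟩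

lemma eq_of_mProd_four_eq_one [NoZeroDivisors A] {a b c d : A} (h : mProd [a, b, c, d] = 1) :
    (b = 0 ∧ c = -a ∧ d = 0) ∨ (a = 0 ∧ c = 0 ∧ d = -b) := by
  obtain ⟨-, h01, h10, h11⟩ := Matrix.fin_two_eq_one_iff.mp (mProd_four a b c d ▸ h)
  rcases mul_eq_zero.mp (by linear_combination -h11 : c * b = 0) with rfl | rfl
  · obtain rfl : a = 0 := by linear_combination -h10
    exact Or.inr ⟨rfl, rfl, by linear_combination h01⟩
  · exact Or.inl ⟨rfl, by linear_combination -h10, by linear_combination h01⟩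

lemma eq_of_mProd_four_eq_neg_one {a b c d : A} (h : mProd [a, b, c, d] = -1) :
    c = a ∧ d = b ∧ a * b = 2 := by
  obtain ⟨-, h01, h10, h11⟩ := Matrix.fin_two_eq_neg_one_iff.mp (mProd_four a b c d ▸ h)
  obtain rfl : c = a := by linear_combination -h10 - a * h11
  obtain rfl : d = b := by linear_combination -h01 + d * h11
  exact ⟨rfl, rfl, by linear_combination -h11⟩

end CommRing

section LinearOrderedCommRing

variable {A : Type*} [CommRing A] [LinearOrder A] [IsStrictOrderedRing A]

lemma abs_mProd_one_one_lt {l : List A} (hl : l ≠ []) (h2 : ∀ x ∈ l, 2 ≤ |x|) :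
    |mProd l 1 1| < |mProd l 1 0| := by
  induction l with
  | nil => exact absurd rfl hl
  | cons x l ih =>
    have hx : 2 ≤ |x| := h2 x List.mem_cons_self
    rcases eq_or_ne l [] with rfl | hl
    · simp [mProd, mMat]
    have hM := ih hl fun y hy ↦ h2 y (List.mem_cons_of_mem x hy)
    rw [mProd_cons_one_one, mProd_cons_one_zero, abs_neg]
    calc |mProd l 1 0| < 2 * |mProd l 1 0| - |mProd l 1 1| := by linarith
      _ ≤ |mProd l 1 0 * x| - |mProd l 1 1| := by rw [abs_mul, mul_comm]; gcongr
      _ ≤ |mProd l 1 0 * x + mProd l 1 1| := by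
        simpa using abs_sub_abs_le_abs_sub (mProd l 1 0 * x) (-mProd l 1 1)

lemma exists_abs_lt_two_of_isQuiddity {R : Set A} {c : List A} (hc : c ≠ [])
    (hq : IsQuiddity R c) :
    ∃ x ∈ c, |x| < 2 := by
  by_contra! h
  have := abs_mProd_one_one_lt hc h
  rcases hq.2 with hm | hm <;> norm_num [hm] at this

end LinearOrderedCommRing

lemma mProd_int_four_ne_neg_one {a b c d : ℤ} (ha : a ≠ 1) (ha' : a ≠ -1) (hb : b ≠ 1)
    (hb' : b ≠ -1) : mProd [a, b, c, d] ≠ -1 := by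
  intro h
  obtain ⟨-, -, hab⟩ := eq_of_mProd_four_eq_neg_one h
  have ha0 : a ≠ 0 := by rintro rfl; simp at hab
  have hb0 : b ≠ 0 := by rintro rfl; simp at hab
  rcases (by omega : a ≤ -2 ∨ 2 ≤ a) with ha2 | ha2 <;>
    rcases (by omega : b ≤ -2 ∨ 2 ≤ b) with hb2 | hb2 <;> nlinarith

lemma irreducibleQuiddity_int_four_iff (a b c d : ℤ) :
    IrreducibleQuiddity Set.univ [a, b, c, d] ↔
      (∃ x : ℤ, x ≠ -1 ∧ x ≠ 1 ∧ [a, b, c, d] = [x, 0, -x, 0]) ∨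
      (∃ x : ℤ, x ≠ -1 ∧ x ≠ 1 ∧ [a, b, c, d] = [0, x, 0, -x]) := by
  rw [irreducibleQuiddity_univ_iff_of_length_eq_four rfl]
  constructor
  · rintro ⟨⟨-, hm⟩, h1, h2⟩
    simp only [List.mem_cons, List.not_mem_nil, or_false, not_or] at h1 h2
    rcases hm with hm | hm
    · rcases eq_of_mProd_four_eq_one hm with ⟨rfl, rfl, rfl⟩ | ⟨rfl, rfl, rfl⟩
      · exact Or.inl ⟨a, Ne.symm h2.1, Ne.symm h1.1, rfl⟩
      · exact Or.inr ⟨b, Ne.symm h2.2.1, Ne.symm h1.2.1, rfl⟩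
    · exact absurd hm <| mProd_int_four_ne_neg_one (Ne.symm h1.1) (Ne.symm h2.1)
        (Ne.symm h1.2.1) (Ne.symm h2.2.1)
  · rintro (⟨x, hx, hx', h⟩ | ⟨x, hx, hx', h⟩) <;> rw [h] <;>
      simp [IsQuiddity, mProd_four, Matrix.one_fin_two] <;> omega

lemma not_irreducibleQuiddity_int_of_five_le_length {c : List ℤ} (hc : 5 ≤ c.length) :
    ¬ IrreducibleQuiddity Set.univ c := by
  rintro ⟨hq, -, hirr⟩
  obtain ⟨x, hxc, hx⟩ :=
    exists_abs_lt_two_of_isQuiddity (List.ne_nil_of_length_pos (by omega)) hq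
  rcases (by rw [abs_lt] at hx; omega : x = -1 ∨ x = 0 ∨ x = 1) with rfl | rfl | rfl
  · exact hirr (isReducible_univ_of_mem (Or.inr rfl) (by omega) hxc)
  · exact hirr (isReducible_univ_of_zero_mem hc hxc)
  · exact hirr (isReducible_univ_of_mem (Or.inl rfl) (by omega) hxc)

/-- The irreducible λ-quiddities over `ℤ` are exactly `(1,1,1)`, `(−1,−1,−1)`,
`(a,0,−a,0)` and `(0,a,0,−a)` for `a ∉ {−1,1}`. -/
theorem stmt6 (c : List ℤ) :
    IrreducibleQuiddity (Set.univ : Set ℤ) c ↔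
      c = [1, 1, 1] ∨ c = [-1, -1, -1] ∨
      (∃ a : ℤ, a ≠ -1 ∧ a ≠ 1 ∧ c = [a, 0, -a, 0]) ∨
      (∃ a : ℤ, a ≠ -1 ∧ a ≠ 1 ∧ c = [0, a, 0, -a]) := by
  match c with
  | [] | [_] | [_, _] => simp [IrreducibleQuiddity]
  | [a, b, d] =>
    rw [irreducibleQuiddity_iff_of_length_eq_three rfl, isQuiddity_univ_three_iff]
    simp
  | [a, b, d, e] =>
    rw [irreducibleQuiddity_int_four_iff]
    simp
  | _ :: _ :: _ :: _ :: _ :: l =>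
    simp [not_irreducibleQuiddity_int_of_five_le_length]
end

section
/- The irreducible λ-quiddities over ℤ/4ℤ are exactly the six tuples (1̄,1̄,1̄), (−1̄,−1̄,−1̄), (0̄,0̄,0̄,0̄), (0̄,2̄,0̄,2̄), (2̄,0̄,2̄,0̄) and (2̄,2̄,2̄,2̄). -/
/- ### Auxiliary lemmas -/

lemma oplus_eq {A : Type*} [CommRing A] (x y : A) (t : List A) (b : List A) :
    oplus (x :: t ++ [y]) b =
      (x + b.getLastD 0) :: t ++ (y + b.headD 0) :: b.dropLast.tail := by
  have h1 : (x :: t ++ [y]).dropLast = x :: t := by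
    rw [show x :: t ++ [y] = (x :: t) ++ [y] by simp, List.dropLast_concat]
  have h2 : (x :: t ++ [y]).getLastD 0 = y := by
    rw [show x :: t ++ [y] = (x :: t) ++ [y] by simp, List.getLastD_concat]
  unfold oplus
  rw [h1, h2]
  simp

lemma oplus_length {A : Type*} [CommRing A] (a b : List A)
    (ha : 2 ≤ a.length) (hb : 2 ≤ b.length) :
    (oplus a b).length = a.length + b.length - 2 := by
  simp [oplus]
  omega

lemma mem_decomp {A : Type*} (c : List A) (v : A) (h : v ∈ c) :
    ∃ k d, c.rotate k = d ++ [v] ∧ d.length + 1 = c.length := by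
  obtain ⟨s, t, rfl⟩ := List.mem_iff_append.mp h
  have h0 : (s ++ v :: t).rotate s.length = v :: (t ++ s) := by
    rw [List.rotate_eq_drop_append_take (by simp)]
    rw [List.drop_left, List.take_left]
    simp
  have h1 : (v :: (t ++ s)).rotate 1 = (t ++ s) ++ [v] := by
    rw [List.rotate_eq_drop_append_take (by simp)]
    simp
  refine ⟨s.length + 1, t ++ s, ?_, by simp; omega⟩
  rw [← List.rotate_rotate, h0, h1]

lemma decomp2 {A : Type*} (c : List A) (h : 3 ≤ c.length) :
    ∃ x t y, c = x :: t ++ [y] ∧ t.length + 2 = c.length := by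
  rcases List.eq_nil_or_concat c with rfl | ⟨d, y, rfl⟩
  · simp at h
  · rcases d with _ | ⟨x, t⟩
    · simp at h
    · refine ⟨x, t, y, ?_, ?_⟩ <;> simp [List.concat_eq_append]

lemma decomp3 {A : Type*} (c : List A) (h : 5 ≤ c.length) :
    ∃ x t y p q, c = x :: t ++ [y, p, q] ∧ t ≠ [] := by
  rcases List.eq_nil_or_concat c with rfl | ⟨d, q, rfl⟩
  · simp at h
  rcases List.eq_nil_or_concat d with rfl | ⟨e, p, rfl⟩
  · simp at h
  obtain ⟨x, t, y, rfl, hl⟩ := decomp2 e (by simp [List.concat_eq_append] at h ⊢; omega)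
  refine ⟨x, t, y, p, q, by simp [List.concat_eq_append], ?_⟩
  intro hnil
  subst hnil
  simp [List.concat_eq_append] at h hl

lemma reduce_gen (c a b : List (ZMod 4)) (k : ℕ) (ha3 : 3 ≤ a.length) (hb3 : 3 ≤ b.length)
    (hb : mProd b = 1 ∨ mProd b = -1) (h : c.rotate k = oplus a b) :
    IsReducible Set.univ c :=
  ⟨a, b, ha3, hb3, fun _ _ => Set.mem_univ _, ⟨fun _ _ => Set.mem_univ _, hb⟩, Or.inl ⟨k, h.symm⟩⟩

lemma reduce_single (c : List (ZMod 4)) (k : ℕ) (x y v : ZMod 4) (t : List (ZMod 4))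
    (ht : t ≠ []) (hb : mProd [v, v, v] = 1 ∨ mProd [v, v, v] = -1)
    (h : c.rotate k = x :: t ++ [y, v]) : IsReducible Set.univ c := by
  apply reduce_gen c ((x - v) :: t ++ [y - v]) [v, v, v] k
  · have := List.length_pos_iff.mpr ht
    simp
    omega
  · simp
  · exact hb
  · rw [h, oplus_eq]
    simp [sub_add_cancel]

lemma reduce_pair (c : List (ZMod 4)) (k : ℕ) (x y p q b1 b4 : ZMod 4) (t : List (ZMod 4))
    (ht : t ≠ []) (hb : mProd [b1, p, q, b4] = 1 ∨ mProd [b1, p, q, b4] = -1)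
    (h : c.rotate k = x :: t ++ [y, p, q]) : IsReducible Set.univ c := by
  apply reduce_gen c ((x - b4) :: t ++ [y - b1]) [b1, p, q, b4] k
  · have := List.length_pos_iff.mpr ht
    simp
    omega
  · simp
  · exact hb
  · rw [h, oplus_eq]
    simp [sub_add_cancel]

lemma enum3 : ∀ x y z : ZMod 4, (mProd [x, y, z] = 1 ∨ mProd [x, y, z] = -1) →
    ([x, y, z] = ([1, 1, 1] : List (ZMod 4)) ∨ [x, y, z] = ([-1, -1, -1] : List (ZMod 4))) := by
  decide

lemma enum4 : ∀ x y z w : ZMod 4, (mProd [x, y, z, w] = 1 ∨ mProd [x, y, z, w] = -1) →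
    (x = 1 ∨ x = -1 ∨ y = 1 ∨ y = -1 ∨ z = 1 ∨ z = -1 ∨ w = 1 ∨ w = -1 ∨
     [x, y, z, w] = ([0, 0, 0, 0] : List (ZMod 4)) ∨
     [x, y, z, w] = ([0, 2, 0, 2] : List (ZMod 4)) ∨
     [x, y, z, w] = ([2, 0, 2, 0] : List (ZMod 4)) ∨
     [x, y, z, w] = ([2, 2, 2, 2] : List (ZMod 4))) := by
  decide

lemma reduce_of_mem (c : List (ZMod 4)) (v : ZMod 4)
    (hv : mProd [v, v, v] = 1 ∨ mProd [v, v, v] = -1)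
    (h : v ∈ c) (hl : 4 ≤ c.length) : IsReducible Set.univ c := by
  obtain ⟨k, d, hk, hd⟩ := mem_decomp c v h
  obtain ⟨x, t, y, rfl, ht⟩ := decomp2 d (by omega)
  refine reduce_single c k x y v t ?_ hv ?_
  · intro hnil
    subst hnil
    simp at hd
    omega
  · rw [hk]
    simp

lemma tupEquiv_length {A : Type*} {c d : List A} (h : TupEquiv c d) : d.length = c.length := by
  rcases h with ⟨k, rfl⟩ | ⟨k, rfl⟩ <;> simp

lemma tupEquiv_mem {A : Type*} {c d : List A} (h : TupEquiv c d) {x : A} (hx : x ∈ d) :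
    x ∈ c := by
  rcases h with ⟨k, rfl⟩ | ⟨k, rfl⟩
  · exact (List.mem_rotate).mp hx
  · exact List.mem_reverse.mp ((List.mem_rotate).mp hx)

lemma len_eq_four {A : Type*} (l : List A) (h : l.length = 4) :
    ∃ a b c d, l = [a, b, c, d] := by
  rcases l with _ | ⟨a, t⟩
  · simp at h
  · obtain ⟨b, c, d, rfl⟩ := List.length_eq_three.mp (by simpa using h)
    exact ⟨a, b, c, d, rfl⟩

/-- key backward lemma: a concrete list of length 3 or 4 with entries in {0,2} (for length 4)
is not reducible, given it contains neither 1 nor -1. -/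
lemma not_reducible_aux (c : List (ZMod 4)) (hc : c.length = 3 ∨ c.length = 4)
    (h1 : (1 : ZMod 4) ∉ c) (hm1 : (-1 : ZMod 4) ∉ c) :
    ¬ IsReducible Set.univ c := by
  rintro ⟨a, b, ha3, hb3, -, ⟨-, hbq⟩, heq⟩
  have hlen := tupEquiv_length heq
  rw [oplus_length a b (by omega) (by omega)] at hlen
  rcases hc with hc | hc
  · omega
  · have ha : a.length = 3 := by omega
    have hb : b.length = 3 := by omega
    obtain ⟨b1, b2, b3, rfl⟩ := List.length_eq_three.mp hb
    rcases enum3 b1 b2 b3 hbq with h | h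
    · refine h1 (tupEquiv_mem heq ?_)
      rw [h]
      simp [oplus]
    · refine hm1 (tupEquiv_mem heq ?_)
      rw [h]
      simp [oplus]

/-- The irreducible λ-quiddities over `ℤ/4ℤ` are exactly `(1,1,1)`, `(−1,−1,−1)`,
`(0,0,0,0)`, `(0,2,0,2)`, `(2,0,2,0)` and `(2,2,2,2)`. -/
theorem stmt10 (c : List (ZMod 4)) :
    IrreducibleQuiddity (Set.univ : Set (ZMod 4)) c ↔
      c = [1, 1, 1] ∨ c = [-1, -1, -1] ∨ c = [0, 0, 0, 0] ∨
      c = [0, 2, 0, 2] ∨ c = [2, 0, 2, 0] ∨ c = [2, 2, 2, 2] := by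
  constructor
  · rintro ⟨⟨-, hq⟩, hlen, hirr⟩
    rcases Nat.lt_or_ge c.length 4 with h4 | h4
    · -- length 3
      obtain ⟨x, y, z, rfl⟩ := List.length_eq_three.mp (show c.length = 3 by omega)
      rcases enum3 x y z hq with h | h
      · exact Or.inl h
      · exact Or.inr (Or.inl h)
    rcases Nat.lt_or_ge c.length 5 with h5 | h5
    · -- length 4
      by_cases h1 : (1 : ZMod 4) ∈ c
      · exact absurd (reduce_of_mem c 1 (by decide) h1 (by omega)) hirr
      by_cases hm1 : (-1 : ZMod 4) ∈ c
      · exact absurd (reduce_of_mem c (-1) (by decide) hm1 (by omega)) hirr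
      obtain ⟨x, y, z, w, rfl⟩ := len_eq_four c (by omega)
      rcases enum4 x y z w hq with rfl | rfl | rfl | rfl | rfl | rfl | rfl | rfl | h | h | h | h
      · exact absurd (by simp) h1
      · exact absurd (by simp) hm1
      · exact absurd (by simp) h1
      · exact absurd (by simp) hm1
      · exact absurd (by simp) h1
      · exact absurd (by simp) hm1
      · exact absurd (by simp) h1
      · exact absurd (by simp) hm1
      · exact Or.inr (Or.inr (Or.inl h))
      · exact Or.inr (Or.inr (Or.inr (Or.inl h)))
      · exact Or.inr (Or.inr (Or.inr (Or.inr (Or.inl h))))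
      · exact Or.inr (Or.inr (Or.inr (Or.inr (Or.inr h))))
    · -- length ≥ 5 : always reducible, contradiction
      exfalso
      apply hirr
      by_cases h1 : (1 : ZMod 4) ∈ c
      · exact reduce_of_mem c 1 (by decide) h1 (by omega)
      by_cases hm1 : (-1 : ZMod 4) ∈ c
      · exact reduce_of_mem c (-1) (by decide) hm1 (by omega)
      have key : ∀ v : ZMod 4, v ≠ 1 → v ≠ -1 → v = 0 ∨ v = 2 := by decide
      obtain ⟨x, t, y, p, q, rfl, ht⟩ := decomp3 c h5
      have hp : p = 0 ∨ p = 2 := by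
        refine key p ?_ ?_ <;> rintro rfl <;> [exact h1 (by simp); exact hm1 (by simp)]
      have hq2 : q = 0 ∨ q = 2 := by
        refine key q ?_ ?_ <;> rintro rfl <;> [exact h1 (by simp); exact hm1 (by simp)]
      rcases hp with rfl | rfl <;> rcases hq2 with rfl | rfl
      · exact reduce_pair _ 0 x y 0 0 0 0 t ht (by decide) (by rw [List.rotate_zero])
      · exact reduce_pair _ 0 x y 0 2 2 0 t ht (by decide) (by rw [List.rotate_zero])
      · exact reduce_pair _ 0 x y 2 0 0 2 t ht (by decide) (by rw [List.rotate_zero])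
      · exact reduce_pair _ 0 x y 2 2 2 2 t ht (by decide) (by rw [List.rotate_zero])
  · intro h
    have step : ∀ d : List (ZMod 4), (d.length = 3 ∨ d.length = 4) →
        (1 : ZMod 4) ∉ d → (-1 : ZMod 4) ∉ d →
        (mProd d = 1 ∨ mProd d = -1) → IrreducibleQuiddity (Set.univ : Set (ZMod 4)) d := by
      intro d hd h1 hm1 hq
      exact ⟨⟨fun _ _ => Set.mem_univ _, hq⟩, by omega, not_reducible_aux d hd h1 hm1⟩
    rcases h with rfl | rfl | rfl | rfl | rfl | rfl
    · -- [1,1,1] : length 3, reducibility impossible by length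
      refine ⟨⟨fun _ _ => Set.mem_univ _, by decide⟩, by simp, ?_⟩
      rintro ⟨a, b, ha3, hb3, -, ⟨-, hbq⟩, heq⟩
      have hlen := tupEquiv_length heq
      rw [oplus_length a b (by omega) (by omega)] at hlen
      simp at hlen
      omega
    · refine ⟨⟨fun _ _ => Set.mem_univ _, by decide⟩, by simp, ?_⟩
      rintro ⟨a, b, ha3, hb3, -, ⟨-, hbq⟩, heq⟩
      have hlen := tupEquiv_length heq
      rw [oplus_length a b (by omega) (by omega)] at hlen
      simp at hlen
      omega
    · exact step _ (by simp) (by decide) (by decide) (by decide)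
    · exact step _ (by simp) (by decide) (by decide) (by decide)
    · exact step _ (by simp) (by decide) (by decide) (by decide)
    · exact step _ (by simp) (by decide) (by decide) (by decide)
end

section
/- Let A be a commutative unitary ring with A ≠ {0}. The set of λ-quiddities over A of size 4 is exactly {(−a,b,a,−b) ∈ A⁴ : ab = 0} ∪ {(a,b,a,b) ∈ A⁴ : ab = 2}. -/

lemma mProd_four_s12 {A : Type*} [CommRing A] (x y z w : A) :
    mProd [x, y, z, w] =
      !![w*(z*(x*y-1)-x)-(x*y-1), w*(1-y*z)+y; z*(x*y-1)-x, 1-y*z] := by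
  ext i j
  fin_cases i <;> fin_cases j <;>
    simp [mProd, mMat, Matrix.mul_apply, Fin.sum_univ_succ] <;> ring

/-- Over a nontrivial commutative ring, the λ-quiddities of size 4 are exactly the tuples
`(−a,b,a,−b)` with `ab = 0` and `(a,b,a,b)` with `ab = 2`. -/
theorem stmt12 {A : Type*} [CommRing A] [Nontrivial A] (c : List A) :
    (c.length = 4 ∧ (mProd c = 1 ∨ mProd c = -1)) ↔
      (∃ a b : A, a * b = 0 ∧ c = [-a, b, a, -b]) ∨
      (∃ a b : A, a * b = 2 ∧ c = [a, b, a, b]) := by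
  constructor
  · rintro ⟨hlen, h⟩
    rcases c with _ | ⟨x, _ | ⟨y, _ | ⟨z, _ | ⟨w, _ | ⟨v, t⟩⟩⟩⟩⟩ <;> simp at hlen
    rw [mProd_four_s12] at h
    rcases h with h | h
    · have h11 := congrFun (congrFun h 0) 0
      have h12 := congrFun (congrFun h 0) 1
      have h21 := congrFun (congrFun h 1) 0
      have h22 := congrFun (congrFun h 1) 1
      simp [Matrix.one_apply] at h11 h12 h21 h22
      have hyz : y * z = 0 := h22
      have hz : z = -x := by linear_combination x * hyz - h21
      have hw : w = -y := by linear_combination h12 + w * hyz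
      have hxy : x * y = 0 := by linear_combination w * h21 - h11
      refine Or.inl ⟨-x, y, by linear_combination -hxy, ?_⟩
      simp [hz, hw]
    · have h11 := congrFun (congrFun h 0) 0
      have h12 := congrFun (congrFun h 0) 1
      have h21 := congrFun (congrFun h 1) 0
      have h22 := congrFun (congrFun h 1) 1
      simp [Matrix.one_apply] at h11 h12 h21 h22
      have hyz : y * z = 2 := by linear_combination -h22
      have hz : z = x := by linear_combination x * hyz - h21
      have hw : w = y := by linear_combination -(h12 + w * hyz)
      refine Or.inr ⟨x, y, by linear_combination hyz - y * hz, ?_⟩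
      simp [hz, hw]
  · rintro (⟨a, b, hab, rfl⟩ | ⟨a, b, hab, rfl⟩)
    · refine ⟨rfl, Or.inl ?_⟩
      rw [mProd_four_s12]
      ext i j
      fin_cases i <;> fin_cases j <;> simp [Matrix.one_apply] <;>
        first
        | linear_combination b*hab | linear_combination (-a)*hab | linear_combination hab
        | linear_combination (a*b+1)*hab | linear_combination (-b)*hab | linear_combination a*hab
        | linear_combination -hab | linear_combination (a*b-1)*hab
    · refine ⟨rfl, Or.inr ?_⟩
      rw [mProd_four_s12]
      ext i j
      fin_cases i <;> fin_cases j <;> simp [Matrix.one_apply] <;>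
        first
        | linear_combination b*hab | linear_combination (-a)*hab | linear_combination hab
        | linear_combination (a*b+1)*hab | linear_combination (-b)*hab | linear_combination a*hab
        | linear_combination -hab | linear_combination (a*b-1)*hab
end

section
/- Let A be a commutative unitary ring with A ≠ {0}. Every λ-quiddity over A of size at least 5 that contains an entry equal to 1 or to −1 is reducible. -/
private lemma mProd_three_one {A : Type*} [CommRing A] : mProd [(1:A),1,1] = -1 := by
  simp [mProd, mMat, Matrix.mul_fin_two]
  ext i j; fin_cases i <;> fin_cases j <;> simp [Matrix.one_fin_two]

private lemma mProd_three_neg_one {A : Type*} [CommRing A] : mProd [(-1:A),-1,-1] = 1 := by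
  simp [mProd, mMat, Matrix.mul_fin_two]
  ext i j; fin_cases i <;> fin_cases j <;> simp [Matrix.one_fin_two]

private lemma key_reducible {A : Type*} [CommRing A] (c : List A) (ε : A)
    (hb : mProd [ε,ε,ε] = 1 ∨ mProd [ε,ε,ε] = -1) (hε : ε ∈ c) (hlen : 5 ≤ c.length) :
    IsReducible Set.univ c := by
  obtain ⟨i, hi, hci⟩ := List.mem_iff_getElem.1 hε
  obtain ⟨l, hd, hllen⟩ : ∃ l : List A, c.rotate (i+1) = l ++ [ε] ∧ 4 ≤ l.length := by
    refine ⟨c.drop (i+1) ++ c.take i, ?_, ?_⟩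
    · rw [List.rotate_eq_drop_append_take (by omega), List.take_succ]
      simp [List.getElem?_eq_getElem hi, hci]
    · simp only [List.length_append, List.length_drop, List.length_take]; omega
  obtain ⟨x, t, rfl⟩ : ∃ x t, l = x :: t := by
    cases l with
    | nil => simp at hllen
    | cons x t => exact ⟨x, t, rfl⟩
  have ht : t ≠ [] := by rintro rfl; simp at hllen
  obtain ⟨m, y, rfl⟩ : ∃ m y, t = m ++ [y] :=
    ⟨t.dropLast, t.getLast ht, (t.dropLast_append_getLast ht).symm⟩
  refine ⟨(x - ε) :: (m ++ [y - ε]), [ε,ε,ε], ?_, by simp, fun _ _ => trivial,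
    ⟨fun _ _ => trivial, hb⟩, Or.inl ⟨i+1, ?_⟩⟩
  · simp only [List.length_cons, List.length_append, List.length_cons] at hllen ⊢
    omega
  · rw [hd]
    have h1 : ((x - ε) :: (m ++ [y - ε])).dropLast = (x - ε) :: m := by
      rw [List.dropLast_cons_of_ne_nil (by simp), List.dropLast_concat]
    have h2 : ((x - ε) :: (m ++ [y - ε])).getLast? = some (y - ε) := by
      rw [show (x - ε) :: (m ++ [y - ε]) = ((x - ε) :: m) ++ [y - ε] from by simp,
        List.getLast?_concat]
    simp only [oplus, h1, h2]
    simp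
    rw [h2]
    simp

/-- Over a nontrivial commutative ring, every λ-quiddity of size at least 5 containing an
entry equal to `1` or `−1` is reducible. -/
theorem stmt13 {A : Type*} [CommRing A] [Nontrivial A] (c : List A)
    (hc : IsQuiddity Set.univ c) (hlen : 5 ≤ c.length)
    (h : (1 : A) ∈ c ∨ (-1 : A) ∈ c) :
    IsReducible Set.univ c := by
  rcases h with h | h
  · exact key_reducible c 1 (Or.inr mProd_three_one) h hlen
  · exact key_reducible c (-1) (Or.inl mProd_three_neg_one) h hlen
end

section
/- Let A be a commutative unitary ring with A ≠ {0}. Every λ-quiddity over A of size at least 5 that contains an entry equal to 0 is reducible. -/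
/-!
Rotate a zero entry to the last place, so that `c ∼ (x, l, q, 0)`. Then
`(x, l, q, 0) = (x + q, l) ⊕ (0, q, 0, -q)`, and `(0, q, 0, -q)` is a λ-quiddity for every `q`
since its matrix product is `Id`. The size bound `n ≥ 5` makes the first summand of size
`n - 2 ≥ 3`.
-/

lemma mProd_zero_cons_zero_neg {A : Type*} [CommRing A] (q : A) : mProd [0, q, 0, -q] = 1 := by
  ext i j
  fin_cases i <;> fin_cases j <;>
    simp [mProd, mMat, Matrix.mul_apply, Fin.sum_univ_succ]

lemma isQuiddity_zero_cons_zero_neg {A : Type*} [CommRing A] (q : A) :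
    IsQuiddity Set.univ [0, q, 0, -q] :=
  ⟨fun _ _ => trivial, Or.inl (mProd_zero_cons_zero_neg q)⟩

lemma oplus_zero_cons_zero_neg {A : Type*} [CommRing A] (x q : A) {l : List A} (hl : l ≠ []) :
    oplus ((x + q) :: l) [0, q, 0, -q] = x :: l ++ [q, 0] := by
  have hlast : ((x + q) :: l).getLastD 0 = l.getLast hl := by
    rw [List.getLastD_cons, List.getLastD_eq_getLast?, List.getLast?_eq_some_getLast hl]; rfl
  have hsplit : l.dropLast ++ l.getLast hl :: [q, 0] = l ++ [q, 0] := by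
    simpa using congrArg (· ++ [q, 0]) (List.dropLast_append_getLast hl)
  rw [oplus, hlast, List.dropLast_cons_of_ne_nil hl]
  simpa using hsplit

lemma exists_rotate_eq_concat {α : Type*} {a : α} {l : List α} (h : a ∈ l) :
    ∃ k u, l.rotate k = u ++ [a] := by
  obtain ⟨s, t, rfl⟩ := List.append_of_mem h
  refine ⟨(s ++ [a]).length, t ++ s, ?_⟩
  simpa using List.rotate_append_length_eq (s ++ [a]) t

lemma exists_oplus_zero_cons_zero_neg_eq {A : Type*} [CommRing A] {u : List A}
    (hu : 4 ≤ u.length) : ∃ a q, 3 ≤ a.length ∧ oplus a [0, q, 0, -q] = u ++ [0] := by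
  obtain ⟨_ | ⟨x, l⟩, q, rfl⟩ :=
    (List.eq_nil_or_concat' u).resolve_left (by rintro rfl; simp at hu)
  · simp at hu
  · refine ⟨(x + q) :: l, q, by simp at hu ⊢; omega, ?_⟩
    rw [oplus_zero_cons_zero_neg x q (by rintro rfl; simp at hu)]
    simp

theorem stmt14_general {A : Type*} [CommRing A] (c : List A)
    (hlen : 5 ≤ c.length)
    (h : (0 : A) ∈ c) :
    IsReducible Set.univ c := by
  obtain ⟨k, u, hu⟩ := exists_rotate_eq_concat h
  have hu_len : 4 ≤ u.length := by
    have := congrArg List.length hu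
    simp only [List.length_rotate, List.length_append, List.length_singleton] at this
    omega
  obtain ⟨a, q, ha, hau⟩ := exists_oplus_zero_cons_zero_neg_eq hu_len
  exact ⟨a, [0, q, 0, -q], ha, by simp, fun _ _ => trivial,
    isQuiddity_zero_cons_zero_neg q, Or.inl ⟨k, by rw [hau, hu]⟩⟩

/-- Over a nontrivial commutative ring, every λ-quiddity of size at least 5 containing an
entry equal to `0` is reducible. -/
theorem stmt14 {A : Type*} [CommRing A] [Nontrivial A] (c : List A)
    (hc : IsQuiddity Set.univ c) (hlen : 5 ≤ c.length)
    (h : (0 : A) ∈ c) :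
    IsReducible Set.univ c :=
  stmt14_general c hlen h
end
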